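/- Let H be a finite simple graph and let A ⊆ V(H) be a nonempty set such that H[A] is connected and S := N_H(A) is nonempty. Then S is a minimal separator of H (i.e., a minimal xy-separator for some pair of vertices x, y) if and only if there exists a connected component B of H − N_H[A] with N_H(B) = S. -/

import Mathlib

/-!
STATEMENT 3: For a nonempty `A ⊆ V(H)` with `H[A]` connected and `S := N_H(A)` nonempty,
`S` is a minimal separator of `H` iff there exists a connected component `B` of
`H − N_H[A]` with `N_H(B) = S`.
-/

/-- The (open) neighborhood of a set `A`: vertices outside `A` with a neighbor in `A`. -/
def nbhd {V : Type*} (H : SimpleGraph V) (A : Set V) : Set V :=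
  {v | v ∉ A ∧ ∃ a ∈ A, H.Adj a v}

/-- `S` is an `xy`-separator: `x, y ∉ S` and `x` and `y` lie in different connected
components of `H − S`, i.e. every walk from `x` to `y` in `H` meets `S`. -/
def IsSep {V : Type*} (H : SimpleGraph V) (x y : V) (S : Set V) : Prop :=
  x ∉ S ∧ y ∉ S ∧ ∀ p : H.Walk x y, ∃ v ∈ p.support, v ∈ S

/-- `S` is a minimal `xy`-separator: no proper subset of `S` is an `xy`-separator. -/
def IsMinSep {V : Type*} (H : SimpleGraph V) (x y : V) (S : Set V) : Prop :=
  IsSep H x y S ∧ ∀ S' ⊂ S, ¬ IsSep H x y S'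

/-!
Write `B_v` for the component of `v` in `H - N[A]`; its neighbourhood always lies in `N(A)`.
If `N(A)` is a minimal `xy`-separator, then `x` and `y` cannot both lie in the connected set `A`,
say `y ∉ A`. Each `s ∈ N(A)` lies on an `x`-`y` walk meeting `N(A)` only at `s`, and since
`x ∉ B_y` this walk must leave `B_y` at `s`, so `s ∈ N(B_y)`. Conversely, if `N(B_v) = N(A)`,
then for `x ∈ A` each `s ∈ N(A)` is reached from `x` through `A` and from `v` through `B_v`,
which gives an `x`-`v` walk meeting `N(A)` only at `s`.
-/

open SimpleGraph

section

variable {V : Type*} {H : SimpleGraph V}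

/-- The vertex set of the component of `v` in `H - X` (empty when `v ∈ X`). -/
def reachAvoiding (H : SimpleGraph V) (X : Set V) (v : V) : Set V :=
  {w | ∃ p : H.Walk v w, ∀ u ∈ p.support, u ∉ X}

lemma self_mem_reachAvoiding {X : Set V} {v : V} (hv : v ∉ X) : v ∈ reachAvoiding H X v :=
  ⟨.nil, by simpa using hv⟩

lemma notMem_reachAvoiding {X : Set V} {v w : V} (hw : w ∈ X) : w ∉ reachAvoiding H X v :=
  fun ⟨p, hp⟩ => hp w p.end_mem_support hw

lemma nbhd_reachAvoiding_subset (X : Set V) (v : V) : nbhd H (reachAvoiding H X v) ⊆ X := by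
  rintro u ⟨hu, w, ⟨p, hp⟩, hwu⟩
  by_contra huX
  refine hu ⟨p.concat hwu, fun t ht => ?_⟩
  rw [Walk.support_concat, List.mem_append, List.mem_singleton] at ht
  rcases ht with ht | rfl
  exacts [hp t ht, huX]

lemma nbhd_reachAvoiding_closedNbhd_subset (A : Set V) (v : V) :
    nbhd H (reachAvoiding H (A ∪ nbhd H A) v) ⊆ nbhd H A := by
  intro u hu
  obtain ⟨-, w, hw, hwu⟩ := id hu
  rcases nbhd_reachAvoiding_subset _ _ hu with huA | huA
  · have hwX : w ∉ A ∪ nbhd H A := fun h => notMem_reachAvoiding h hw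
    exact absurd (Or.inr ⟨fun h => hwX (Or.inl h), u, huA, hwu.symm⟩) hwX
  · exact huA

lemma SimpleGraph.Walk.exists_mem_support_mem_nbhd {S : Set V} {u v : V} (p : H.Walk u v)
    (hu : u ∈ S) (hv : v ∉ S) : ∃ w ∈ p.support, w ∈ nbhd H S := by
  obtain ⟨d, hd, hfst, hsnd⟩ := p.exists_boundary_dart S hu hv
  exact ⟨d.snd, p.dart_snd_mem_support_of_mem_darts hd, hsnd, d.fst, hfst, d.adj⟩

lemma exists_walk_support_subset_of_connected_induce {A : Set V} (hconn : (H.induce A).Connected)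
    {x a : V} (hx : x ∈ A) (ha : a ∈ A) : ∃ p : H.Walk x a, ∀ u ∈ p.support, u ∈ A := by
  obtain ⟨q⟩ := hconn.preconnected ⟨x, hx⟩ ⟨a, ha⟩
  refine ⟨q.map (Embedding.induce A).toHom, fun u hu => ?_⟩
  obtain ⟨⟨u, huA⟩, -, rfl⟩ := List.mem_map.mp (q.support_map _ ▸ hu)
  exact huA

lemma IsSep.symm {x y : V} {S : Set V} (h : IsSep H x y S) : IsSep H y x S := by
  refine ⟨h.2.1, h.1, fun p => ?_⟩
  obtain ⟨v, hv, hvS⟩ := h.2.2 p.reverse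
  exact ⟨v, by simpa using hv, hvS⟩

lemma IsMinSep.symm {x y : V} {S : Set V} (h : IsMinSep H x y S) : IsMinSep H y x S :=
  ⟨h.1.symm, fun S' hS' hsep => h.2 S' hS' hsep.symm⟩

lemma isMinSep_iff {x y : V} {S : Set V} :
    IsMinSep H x y S ↔
      IsSep H x y S ∧ ∀ s ∈ S, ∃ p : H.Walk x y, ∀ u ∈ p.support, u ∈ S → u = s := by
  refine ⟨fun h => ⟨h.1, fun s hs => ?_⟩, fun ⟨hsep, hwalk⟩ => ⟨hsep, fun S' hS' hsep' => ?_⟩⟩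
  · by_contra! hno
    refine h.2 (S \ {s}) (Set.sdiff_singleton_ssubset.mpr hs)
      ⟨fun hx => h.1.1 hx.1, fun hy => h.1.2.1 hy.1, fun p => ?_⟩
    obtain ⟨u, hu, huS, hus⟩ := hno p
    exact ⟨u, hu, huS, hus⟩
  · obtain ⟨s, hsS, hsS'⟩ := Set.exists_of_ssubset hS'
    obtain ⟨p, hp⟩ := hwalk s hsS
    obtain ⟨u, hu, huS'⟩ := hsep'.2.2 p
    exact hsS' (hp u hu (hS'.subset huS') ▸ huS')

lemma IsSep.notMem_or_notMem_of_nbhd {A : Set V} {x y : V} (h : IsSep H x y (nbhd H A))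
    (hconn : (H.induce A).Connected) : x ∉ A ∨ y ∉ A := by
  by_contra! hxy
  obtain ⟨p, hp⟩ := exists_walk_support_subset_of_connected_induce hconn hxy.1 hxy.2
  obtain ⟨u, hu, huS⟩ := h.2.2 p
  exact huS.1 (hp u hu)

lemma IsMinSep.nbhd_reachAvoiding_eq {A : Set V} {x y : V} (h : IsMinSep H x y (nbhd H A))
    (hy : y ∉ A) : nbhd H (reachAvoiding H (A ∪ nbhd H A) y) = nbhd H A := by
  refine (nbhd_reachAvoiding_closedNbhd_subset A y).antisymm fun s hs => ?_
  obtain ⟨p, hp⟩ := (isMinSep_iff.mp h).2 s hs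
  have hyB : y ∈ reachAvoiding H (A ∪ nbhd H A) y :=
    self_mem_reachAvoiding fun hy' => hy'.elim hy h.1.2.1
  have hxB : x ∉ reachAvoiding H (A ∪ nbhd H A) y := by
    rintro ⟨q, hq⟩
    obtain ⟨u, hu, huS⟩ := h.1.symm.2.2 q
    exact hq u hu (Or.inr huS)
  obtain ⟨u, hu, huB⟩ := p.reverse.exists_mem_support_mem_nbhd hyB hxB
  rwa [← hp u (by simpa using hu) (nbhd_reachAvoiding_closedNbhd_subset A y huB)]

lemma isMinSep_of_subset_nbhd_reachAvoiding {A : Set V} (hconn : (H.induce A).Connected)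
    {x v : V} (hx : x ∈ A) (hv : v ∉ A ∪ nbhd H A)
    (hN : nbhd H A ⊆ nbhd H (reachAvoiding H (A ∪ nbhd H A) v)) : IsMinSep H x v (nbhd H A) := by
  refine isMinSep_iff.mpr ⟨⟨fun h => h.1 hx, fun h => hv (Or.inr h), fun p =>
    p.exists_mem_support_mem_nbhd hx fun h => hv (Or.inl h)⟩, fun s hs => ?_⟩
  obtain ⟨hsA, a, ha, has⟩ := hs
  obtain ⟨-, b, ⟨q, hq⟩, hbs⟩ := hN ⟨hsA, a, ha, has⟩
  obtain ⟨r, hr⟩ := exists_walk_support_subset_of_connected_induce hconn hx ha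
  refine ⟨r.append (.cons has (.cons hbs.symm q.reverse)), fun u hu huS => ?_⟩
  simp only [Walk.mem_support_append_iff, Walk.support_cons, Walk.support_reverse,
    List.mem_cons, List.mem_reverse] at hu
  rcases hu with hu | rfl | rfl | hu
  exacts [absurd (hr u hu) huS.1, absurd ha huS.1, rfl, absurd (Or.inr huS) (hq u hu)]

end

theorem separator_chunk_characterization_general {V : Type*} (H : SimpleGraph V)
    (A : Set V) (hA : A.Nonempty) (hconn : (H.induce A).Connected)
    (S : Set V) (hS : S = nbhd H A) :
    (∃ x y : V, IsMinSep H x y S) ↔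
      (∃ v : V, v ∉ A ∪ nbhd H A ∧
        nbhd H {w | ∃ p : H.Walk v w, ∀ u ∈ p.support, u ∉ A ∪ nbhd H A} = S) := by
  subst hS
  constructor
  · rintro ⟨x, y, h⟩
    rcases h.1.notMem_or_notMem_of_nbhd hconn with hx | hy
    · exact ⟨x, fun h' => h'.elim hx h.1.1, h.symm.nbhd_reachAvoiding_eq hx⟩
    · exact ⟨y, fun h' => h'.elim hy h.1.2.1, h.nbhd_reachAvoiding_eq hy⟩
  · rintro ⟨v, hv, hN⟩
    obtain ⟨x, hx⟩ := hA
    exact ⟨x, v, isMinSep_of_subset_nbhd_reachAvoiding hconn hx hv hN.ge⟩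

theorem separator_chunk_characterization {V : Type*} [Fintype V] (H : SimpleGraph V)
    (A : Set V) (hA : A.Nonempty) (hconn : (H.induce A).Connected)
    (S : Set V) (hS : S = nbhd H A) (hSne : S.Nonempty) :
    (∃ x y : V, IsMinSep H x y S) ↔
      (∃ v : V, v ∉ A ∪ nbhd H A ∧
        nbhd H {w | ∃ p : H.Walk v w, ∀ u ∈ p.support, u ∉ A ∪ nbhd H A} = S) :=
  separator_chunk_characterization_general H A hA hconn S hS
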